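/- arXiv:2208.08740 — 5 statements merged into one kernel-verified Lean document; each statement's English description precedes it below -/
import Mathlib

section
/- Let J : A → A be a retraction on an order unit space A (a positive linear map with J(1) = p ∈ [0,1] and J(e) = e whenever e ∈ [0,1] satisfies e ≤ p). Then the focus p is a principal element of the unit interval: if e, f ≤ p and e + f ≤ 1, then e + f ≤ p. -/
theorem retraction_focus_principal_general {A : Type*} [AddCommGroup A] [PartialOrder A] [IsOrderedAddMonoid A] [Module ℝ A]
    (u : A)
    (J : A →ₗ[ℝ] A) (hpos : ∀ a : A, 0 ≤ a → 0 ≤ J a)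
    (p : A) (hJu : J u = p)
    (hretr : ∀ e : A, 0 ≤ e → e ≤ u → e ≤ p → J e = e) :
    ∀ e f : A, 0 ≤ e → e ≤ u → 0 ≤ f → f ≤ u → e ≤ p → f ≤ p →
      e + f ≤ u → e + f ≤ p := by
  intro e f he0 heu hf0 hfu hep hfp hefu
  have hJ_mono : Monotone J := OrderHomClass.mono (PositiveLinearMap.mk₀ J hpos)
  calc e + f = J (e + f) := by rw [map_add, hretr e he0 heu hep, hretr f hf0 hfu hfp]
    _ ≤ J u := hJ_mono hefu
    _ = p := hJu

/-- The focus of a retraction on an order unit space is a principal element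
of the unit interval. -/
theorem retraction_focus_principal {A : Type*} [AddCommGroup A] [PartialOrder A] [IsOrderedAddMonoid A] [Module ℝ A]
    (u : A) (hu0 : 0 ≤ u)
    (hunit : ∀ a : A, ∃ n : ℕ, a ≤ n • u)
    (harch : ∀ a b : A, (∀ n : ℕ, n • a ≤ b) → a ≤ 0)
    (J : A →ₗ[ℝ] A) (hpos : ∀ a : A, 0 ≤ a → 0 ≤ J a)
    (p : A) (hJu : J u = p) (hp0 : 0 ≤ p) (hpu : p ≤ u)
    (hretr : ∀ e : A, 0 ≤ e → e ≤ u → e ≤ p → J e = e) :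
    ∀ e f : A, 0 ≤ e → e ≤ u → 0 ≤ f → f ≤ u → e ≤ p → f ≤ p →
      e + f ≤ u → e + f ≤ p :=
  retraction_focus_principal_general u J hpos p hJu hretr
end

section
/- Let J and J' be compressions on an order unit space A with foci p = J(1) and p' = J'(1). Then J and J' are complementary (i.e., Ker⁺(J) = Im⁺(J') and Ker⁺(J') = Im⁺(J)) if and only if p' = 1 - p. -/
/-!
On the unit interval a compression is pinned down by its focus: for `0 ≤ e ≤ u` one has
`J e = e ↔ e ≤ p` (monotonicity and (F2)) and `J e = 0 ↔ e ≤ u - p` ((F3), and conversely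
`p ≤ u - e` gives `p = J p ≤ p - J e`). So if `p' = u - p` the kernel of `J` and the image of
`J'` agree on the unit interval, and every positive element is a multiple of one in the unit
interval. Since the order is not assumed compatible with real scalars, the positivity of
`n⁻¹ • a` for `0 ≤ a` has to be derived from the Archimedean property. Conversely,
complementarity forces `J' p = 0` and `J' (u - p) = u - p`, whence `p' = J' u = u - p`.
-/

section

variable {A : Type*} [AddCommGroup A] [PartialOrder A]

structure IsArchimedeanOrderUnit (u : A) : Prop where
  nonneg : 0 ≤ u
  exists_le_nsmul : ∀ a : A, ∃ n : ℕ, a ≤ n • u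
  nonpos_of_forall_nsmul_le : ∀ a b : A, (∀ n : ℕ, n • a ≤ b) → a ≤ 0

theorem IsArchimedeanOrderUnit.nonneg_of_nsmul_nonneg [IsOrderedAddMonoid A] {u : A}
    (hu : IsArchimedeanOrderUnit u) {n : ℕ} (hn : n ≠ 0) {x : A}
    (hx : 0 ≤ n • x) : 0 ≤ x := by
  obtain ⟨k, hk⟩ := hu.exists_le_nsmul (-x)
  refine neg_nonpos.mp (hu.nonpos_of_forall_nsmul_le (-x) ((n * k) • u) fun m => ?_)
  -- write `m = n * q + r` with `r < n`: the `n * q` part is nonpositive, the rest is bounded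
  have hq : (m / n) • n • -x ≤ 0 := nsmul_nonpos (by rwa [smul_neg, neg_nonpos]) _
  have hr : (m % n) • -x ≤ (n * k) • u :=
    calc (m % n) • -x ≤ (m % n) • k • u := nsmul_le_nsmul_right hk _
      _ = (k * (m % n)) • u := (mul_nsmul u _ _).symm
      _ ≤ (n * k) • u :=
        nsmul_le_nsmul_left hu.nonneg <| by
          rw [mul_comm n]; exact Nat.mul_le_mul_left k (Nat.mod_lt m (Nat.pos_of_ne_zero hn)).le
  calc m • -x = (m / n) • n • -x + (m % n) • -x := by
        rw [← mul_nsmul, ← add_nsmul, Nat.div_add_mod]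
    _ ≤ (n * k) • u := add_le_of_nonpos_of_le hq hr

variable [Module ℝ A]

structure IsCompression (u : A) (J : A →ₗ[ℝ] A) (p : A) : Prop where
  map_nonneg : ∀ a : A, 0 ≤ a → 0 ≤ J a
  map_unit : J u = p
  focus_nonneg : 0 ≤ p
  focus_le : p ≤ u
  map_eq_self_of_le_focus : ∀ e : A, 0 ≤ e → e ≤ u → e ≤ p → J e = e
  le_sub_focus_of_map_eq_zero : ∀ e : A, 0 ≤ e → e ≤ u → J e = 0 → e ≤ u - p

def posKer (J : A →ₗ[ℝ] A) : Set A := {a | 0 ≤ a ∧ J a = 0}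

def posIm (J : A →ₗ[ℝ] A) : Set A := {a | 0 ≤ a ∧ J a = a}

theorem IsCompression.map_focus {u p : A} {J : A →ₗ[ℝ] A} (hJ : IsCompression u J p) :
    J p = p :=
  hJ.map_eq_self_of_le_focus p hJ.focus_nonneg hJ.focus_le le_rfl

variable [IsOrderedAddMonoid A]

namespace IsArchimedeanOrderUnit

variable {u : A}

theorem exists_smul_mem_Icc (hu : IsArchimedeanOrderUnit u) {a : A} (ha : 0 ≤ a) :
    ∃ c : ℝ, c ≠ 0 ∧ c • a ∈ Set.Icc 0 u := by
  obtain ⟨n, hn⟩ := hu.exists_le_nsmul a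
  have hN : ((n + 1 : ℕ) : ℝ) ≠ 0 := Nat.cast_ne_zero.mpr n.add_one_ne_zero
  have hscale : (n + 1) • (((n + 1 : ℕ) : ℝ)⁻¹ • a) = a := by
    rw [← Nat.cast_smul_eq_nsmul ℝ, smul_smul, mul_inv_cancel₀ hN, one_smul]
  refine ⟨_, inv_ne_zero hN, hu.nonneg_of_nsmul_nonneg n.add_one_ne_zero (by rwa [hscale]), ?_⟩
  refine sub_nonneg.mp (hu.nonneg_of_nsmul_nonneg n.add_one_ne_zero ?_)
  rw [nsmul_sub, hscale, sub_nonneg, succ_nsmul]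
  exact hn.trans (le_add_of_nonneg_right hu.nonneg)

theorem posKer_eq_posIm_of_forall_Icc (hu : IsArchimedeanOrderUnit u) {S T : A →ₗ[ℝ] A}
    (h : ∀ e ∈ Set.Icc 0 u, S e = 0 ↔ T e = e) : posKer S = posIm T := by
  ext a
  refine and_congr_right fun ha => ?_
  obtain ⟨c, hc, hca⟩ := hu.exists_smul_mem_Icc ha
  simpa only [map_smul, smul_eq_zero, hc, false_or, smul_right_inj hc] using h _ hca

end IsArchimedeanOrderUnit

namespace IsCompression

variable {u p : A} {J : A →ₗ[ℝ] A}

theorem monotone (hJ : IsCompression u J p) : Monotone J := fun a b hab => by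
  simpa only [map_sub, sub_nonneg] using hJ.map_nonneg _ (sub_nonneg.mpr hab)

theorem map_eq_self_iff (hJ : IsCompression u J p) {e : A} (he : e ∈ Set.Icc 0 u) :
    J e = e ↔ e ≤ p := by
  refine ⟨fun h => ?_, hJ.map_eq_self_of_le_focus e he.1 he.2⟩
  calc e = J e := h.symm
    _ ≤ J u := hJ.monotone he.2
    _ = p := hJ.map_unit

theorem map_eq_zero_iff (hJ : IsCompression u J p) {e : A} (he : e ∈ Set.Icc 0 u) :
    J e = 0 ↔ e ≤ u - p := by
  refine ⟨hJ.le_sub_focus_of_map_eq_zero e he.1 he.2, fun h => ?_⟩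
  have : p ≤ p - J e :=
    calc p = J p := hJ.map_focus.symm
      _ ≤ J (u - e) := hJ.monotone (le_sub_comm.mp h)
      _ = p - J e := by rw [map_sub, hJ.map_unit]
  exact le_antisymm ((le_sub_self_iff p).mp this) (hJ.map_nonneg e he.1)

theorem posKer_eq_posIm_of_focus_eq_sub {p' : A} {J' : A →ₗ[ℝ] A}
    (hu : IsArchimedeanOrderUnit u) (hJ : IsCompression u J p) (hJ' : IsCompression u J' p')
    (h : p' = u - p) :
    posKer J = posIm J' :=
  hu.posKer_eq_posIm_of_forall_Icc fun e he => by
    rw [hJ.map_eq_zero_iff he, hJ'.map_eq_self_iff he, h]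

theorem focus_eq_sub_of_posKer_subset {p' : A} {J' : A →ₗ[ℝ] A} (hJ : IsCompression u J p)
    (hJ' : IsCompression u J' p') (hker : posKer J ⊆ posIm J') (him : posIm J ⊆ posKer J') :
    p' = u - p := by
  have hJ'p : J' p = 0 := (him ⟨hJ.focus_nonneg, hJ.map_focus⟩).2
  have hJ'_sub : J' (u - p) = u - p := by
    refine (hker ⟨sub_nonneg.mpr hJ.focus_le, ?_⟩).2
    rw [map_sub, hJ.map_unit, hJ.map_focus, sub_self]
  calc p' = J' (u - p) + J' p := by rw [← map_add, sub_add_cancel, hJ'.map_unit]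
    _ = u - p := by rw [hJ'_sub, hJ'p, add_zero]

end IsCompression

end

/-- Two compressions `J`, `J'` on an order unit space, with foci `p = J 1`
and `p' = J' 1`, are complementary (`Ker⁺ J = Im⁺ J'` and `Ker⁺ J' = Im⁺ J`)
iff `p' = 1 - p`. -/
theorem compressions_complementary_iff {A : Type*} [AddCommGroup A] [PartialOrder A] [IsOrderedAddMonoid A] [Module ℝ A]
    (u : A) (hu0 : 0 ≤ u)
    (hunit : ∀ a : A, ∃ n : ℕ, a ≤ n • u)
    (harch : ∀ a b : A, (∀ n : ℕ, n • a ≤ b) → a ≤ 0)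
    (J J' : A →ₗ[ℝ] A)
    (hpos : ∀ a : A, 0 ≤ a → 0 ≤ J a) (hpos' : ∀ a : A, 0 ≤ a → 0 ≤ J' a)
    (p p' : A) (hJu : J u = p) (hJ'u : J' u = p')
    (hp0 : 0 ≤ p) (hpu : p ≤ u) (hp'0 : 0 ≤ p') (hp'u : p' ≤ u)
    (hF2 : ∀ e : A, 0 ≤ e → e ≤ u → e ≤ p → J e = e)
    (hF3 : ∀ e : A, 0 ≤ e → e ≤ u → J e = 0 → e ≤ u - p)
    (hF2' : ∀ e : A, 0 ≤ e → e ≤ u → e ≤ p' → J' e = e)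
    (hF3' : ∀ e : A, 0 ≤ e → e ≤ u → J' e = 0 → e ≤ u - p') :
    ({a : A | 0 ≤ a ∧ J a = 0} = {a : A | 0 ≤ a ∧ J' a = a} ∧
      {a : A | 0 ≤ a ∧ J' a = 0} = {a : A | 0 ≤ a ∧ J a = a}) ↔ p' = u - p := by
  have hu : IsArchimedeanOrderUnit u := ⟨hu0, hunit, harch⟩
  have hJ : IsCompression u J p := ⟨hpos, hJu, hp0, hpu, hF2, hF3⟩
  have hJ' : IsCompression u J' p' := ⟨hpos', hJ'u, hp'0, hp'u, hF2', hF3'⟩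
  change posKer J = posIm J' ∧ posKer J' = posIm J ↔ p' = u - p
  refine ⟨fun h => hJ.focus_eq_sub_of_posKer_subset hJ' h.1.le h.2.ge, fun h => ?_⟩
  exact ⟨hJ.posKer_eq_posIm_of_focus_eq_sub hu hJ' h,
    hJ'.posKer_eq_posIm_of_focus_eq_sub hu hJ (by rw [h, sub_sub_cancel])⟩
end

section
/- Let X be a basically disconnected compact Hausdorff space. For every bounded Baire-measurable function h : X → ℝ there exists a unique continuous function Θ(h) ∈ C(X, ℝ) such that the set {x ∈ X : h(x) ≠ Θ(h)(x)} is meager. -/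
/-- A topological space is basically disconnected if the closure of every open Fσ set
is open. -/
def BasicallyDisconnected (X : Type*) [TopologicalSpace X] : Prop :=
  ∀ U : Set X, IsOpen U → (∃ F : ℕ → Set X, (∀ n, IsClosed (F n)) ∧ U = ⋃ n, F n) →
    IsOpen (closure U)

/-- The Baire σ-algebra on a topological space: the smallest σ-algebra making all
continuous real-valued functions measurable. -/
def baireMS (X : Type*) [TopologicalSpace X] : MeasurableSpace X :=
  ⨆ f : C(X, ℝ), MeasurableSpace.comap f (borel ℝ)

/-!
A Baire set differs from a clopen set by a meagre set: the sets with this property form a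
σ-algebra, because the closure of a countable union of clopen sets is clopen by basic
disconnectedness and differs from the union by a nowhere dense set, and the generators
`f ⁻¹' Iio a` are open Fσ sets. Hence every Baire simple function agrees with a continuous
function off a meagre set. A bounded Baire function is a uniform limit of simple functions; as a
closed condition holding on a residual set holds everywhere (Baire category theorem), their
continuous representatives form a Cauchy sequence in `C(X, ℝ)`, whose limit represents the
function. The same fact gives uniqueness.
-/

open Set Filter Topology MeasureTheory

lemma isMeagre_setOf_ne_iff {X Y : Type*} [TopologicalSpace X] {f g : X → Y} :
    IsMeagre {x | f x ≠ g x} ↔ f =ᵇ g := by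
  simp only [IsMeagre, compl_ofPred, not_not]
  rfl

lemma abs_floor_mul_div_sub_le (y : ℝ) {c : ℝ} (hc : 0 < c) : |⌊y * c⌋ / c - y| ≤ 1 / c := by
  have hdiv : ⌊y * c⌋ / c - y = (⌊y * c⌋ - y * c) / c := by field_simp
  rw [hdiv, abs_div, abs_of_pos hc]
  gcongr
  rw [abs_le]
  constructor <;> linarith [Int.floor_le (y * c), Int.lt_floor_add_one (y * c)]

lemma exists_simpleFunc_tendstoUniformly {α : Type*} [MeasurableSpace α] {h : α → ℝ}
    (hmeas : Measurable h) (hbdd : ∃ M, ∀ x, |h x| ≤ M) :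
    ∃ F : ℕ → SimpleFunc α ℝ, TendstoUniformly (fun n => ⇑(F n)) h atTop := by
  obtain ⟨M, hM⟩ := hbdd
  let r : ℕ → ℝ → ℝ := fun n y => ⌊y * (n + 1)⌋ / (n + 1)
  have hr_meas (n : ℕ) : Measurable (r n) := by fun_prop
  have hr_range (n : ℕ) : (range (r n ∘ h)).Finite := by
    refine ((finite_Icc ⌊-M * (n + 1)⌋ ⌊M * (n + 1)⌋).image
      fun k : ℤ => (k / (n + 1) : ℝ)).subset ?_
    rintro _ ⟨x, rfl⟩
    have hx := abs_le.1 (hM x)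
    exact ⟨_, ⟨Int.floor_le_floor (by gcongr; exact hx.1),
      Int.floor_le_floor (by gcongr; exact hx.2)⟩, rfl⟩
  refine ⟨fun n => ⟨r n ∘ h, fun y => (hr_meas n).comp hmeas (measurableSet_singleton y),
    hr_range n⟩, ?_⟩
  refine Metric.tendstoUniformly_iff.2 fun ε hε => ?_
  filter_upwards [(tendsto_order.1 tendsto_one_div_add_atTop_nhds_zero_nat).2 ε hε] with n hn x
  rw [dist_comm, Real.dist_eq]
  exact (abs_floor_mul_div_sub_le (h x) (by positivity)).trans_lt (by exact_mod_cast hn)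

section Residual

variable {X E : Type*} [TopologicalSpace X]

lemma ContinuousMap.ext_of_residualEq [BaireSpace X] [TopologicalSpace E] [T2Space E]
    {f g : C(X, E)} (hfg : ⇑f =ᵇ ⇑g) : f = g :=
  DFunLike.coe_injective <| f.continuous.ext_on (dense_of_mem_residual hfg) g.continuous
    fun _ hx => hx

lemma ContinuousMap.dist_le_of_eventually_residual [BaireSpace X] [CompactSpace X]
    [PseudoMetricSpace E] {f g : C(X, E)} {ε : ℝ} (hε : 0 ≤ ε)
    (hfg : ∀ᵇ x, dist (f x) (g x) ≤ ε) : dist f g ≤ ε := by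
  have hclosed : IsClosed {x | dist (f x) (g x) ≤ ε} := isClosed_le (by fun_prop) continuous_const
  refine (ContinuousMap.dist_le hε).2 fun x => hclosed.closure_subset ?_
  rw [(dense_of_mem_residual hfg).closure_eq]
  exact mem_univ x

def ResidualEqContinuous [TopologicalSpace E] (f : X → E) : Prop :=
  ∃ g : C(X, E), f =ᵇ g

lemma ResidualEqContinuous.add [TopologicalSpace E] [Add E] [ContinuousAdd E] {f₁ f₂ : X → E}
    (h₁ : ResidualEqContinuous f₁) (h₂ : ResidualEqContinuous f₂) :
    ResidualEqContinuous (f₁ + f₂) := by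
  obtain ⟨g₁, hg₁⟩ := h₁
  obtain ⟨g₂, hg₂⟩ := h₂
  exact ⟨g₁ + g₂, hg₁.add hg₂⟩

lemma residualEqContinuous_indicator_const [TopologicalSpace E] [Zero E] {s V : Set X}
    (hV : IsClopen V) (hsV : s =ᵇ V) (c : E) : ResidualEqContinuous (s.indicator fun _ => c) :=
  ⟨⟨V.indicator fun _ => c, hV.continuous_indicator continuous_const⟩,
    indicator_eventuallyEq .rfl hsV⟩

lemma MeasureTheory.SimpleFunc.residualEqContinuous [MeasurableSpace X] [TopologicalSpace E]
    [AddZeroClass E] [ContinuousAdd E]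
    (hclopen : ∀ s : Set X, MeasurableSet s → ∃ V, IsClopen V ∧ s =ᵇ V) (f : SimpleFunc X E) :
    ResidualEqContinuous f := by
  classical
  induction f using SimpleFunc.induction with
  | const c hs =>
    obtain ⟨V, hV, hsV⟩ := hclopen _ hs
    simp only [SimpleFunc.coe_piecewise, SimpleFunc.coe_const, SimpleFunc.const_zero,
      SimpleFunc.coe_zero, piecewise_eq_indicator]
    exact residualEqContinuous_indicator_const hV hsV c
  | add _ hf hg => exact hf.add hg

lemma ResidualEqContinuous.of_tendstoUniformly [BaireSpace X] [CompactSpace X] [MetricSpace E]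
    [CompleteSpace E] {F : ℕ → X → E} {f : X → E} (hF : ∀ n, ResidualEqContinuous (F n))
    (hFf : TendstoUniformly F f atTop) : ResidualEqContinuous f := by
  choose G hG using hF
  have hFG : ∀ᵇ x, ∀ n, F n x = G n x := eventually_countable_forall.2 hG
  have hCauchy : CauchySeq G := by
    refine Metric.cauchySeq_iff'.2 fun ε hε => ?_
    obtain ⟨N, hN⟩ :=
      eventually_atTop.1 (Metric.tendstoUniformly_iff.1 hFf (ε / 3) (by positivity))
    refine ⟨N, fun n hn => ?_⟩
    have hGnN : dist (G n) (G N) ≤ 2 * (ε / 3) := by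
      refine ContinuousMap.dist_le_of_eventually_residual (by positivity) ?_
      filter_upwards [hFG] with x hx
      rw [← hx n, ← hx N]
      linarith [dist_triangle_left (F n x) (F N x) (f x), hN n hn x, hN N le_rfl x]
    linarith
  obtain ⟨g, hg⟩ := cauchySeq_tendsto_of_complete hCauchy
  refine ⟨g, ?_⟩
  filter_upwards [hFG] with x hx
  refine tendsto_nhds_unique (hFf.tendsto_at x) ?_
  simp only [hx]
  exact ((continuous_eval_const x).tendsto g).comp hg

end Residual

namespace BasicallyDisconnected

variable {X : Type*} [TopologicalSpace X]

lemma isClopen_closure_iUnion (hX : BasicallyDisconnected X) {F : ℕ → Set X}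
    (hF : ∀ n, IsClosed (F n)) (hU : IsOpen (⋃ n, F n)) : IsClopen (closure (⋃ n, F n)) :=
  ⟨isClosed_closure, hX _ hU ⟨F, hF, rfl⟩⟩

def clopenModMeagre (hX : BasicallyDisconnected X) : MeasurableSpace X where
  MeasurableSet' s := ∃ V, IsClopen V ∧ s =ᵇ V
  measurableSet_empty := ⟨∅, isClopen_empty, .rfl⟩
  measurableSet_compl _ := fun ⟨V, hV, hsV⟩ => ⟨Vᶜ, hV.compl, hsV.compl⟩
  measurableSet_iUnion s hs := by
    choose V hV hsV using hs
    have hU : IsOpen (⋃ n, V n) := isOpen_iUnion fun n => (hV n).isOpen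
    exact ⟨_, hX.isClopen_closure_iUnion (fun n => (hV n).isClosed) hU,
      (Filter.EventuallyEq.countable_iUnion hsV).trans
        (closure_residualEq hU.isLocallyClosed).symm⟩

lemma measurableSet_clopenModMeagre_preimage_Iio (hX : BasicallyDisconnected X) (f : C(X, ℝ))
    (a : ℝ) :
    MeasurableSet[hX.clopenModMeagre] (f ⁻¹' Iio a) := by
  have hFσ : f ⁻¹' Iio a = ⋃ n : ℕ, f ⁻¹' Iic (a - 1 / (n + 1)) := by
    ext x
    simp only [mem_preimage, mem_Iio, mem_iUnion, mem_Iic]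
    constructor
    · intro hx
      obtain ⟨n, hn⟩ := exists_nat_one_div_lt (sub_pos.2 hx)
      exact ⟨n, by linarith⟩
    · rintro ⟨n, hn⟩
      linarith [Nat.one_div_pos_of_nat (α := ℝ) (n := n)]
  have hU : IsOpen (f ⁻¹' Iio a) := isOpen_Iio.preimage f.continuous
  rw [hFσ] at hU ⊢
  exact ⟨_, hX.isClopen_closure_iUnion (fun n => isClosed_Iic.preimage f.continuous) hU,
    (closure_residualEq hU.isLocallyClosed).symm⟩

lemma baireMS_le_clopenModMeagre (hX : BasicallyDisconnected X) :
    baireMS X ≤ hX.clopenModMeagre := by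
  refine iSup_le fun f => MeasurableSpace.comap_le_iff_le_map.2 ?_
  rw [borel_eq_generateFrom_Iio]
  refine MeasurableSpace.generateFrom_le ?_
  rintro _ ⟨a, rfl⟩
  exact hX.measurableSet_clopenModMeagre_preimage_Iio f a

end BasicallyDisconnected

/-- On a basically disconnected compact Hausdorff space, every bounded
Baire-measurable function agrees with a unique continuous function off a meager set. -/
theorem baire_approx_continuous (X : Type*) [TopologicalSpace X] [CompactSpace X]
    [T2Space X] (hX : BasicallyDisconnected X)
    (h : X → ℝ) (hmeas : @Measurable X ℝ (baireMS X) (borel ℝ) h)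
    (hbdd : ∃ M, ∀ x, |h x| ≤ M) :
    ∃! g : C(X, ℝ), IsMeagre {x : X | h x ≠ g x} := by
  let := baireMS X
  obtain ⟨F, hF⟩ := exists_simpleFunc_tendstoUniformly hmeas hbdd
  obtain ⟨g, hg⟩ := ResidualEqContinuous.of_tendstoUniformly
    (fun n => (F n).residualEqContinuous hX.baireMS_le_clopenModMeagre) hF
  refine ⟨g, isMeagre_setOf_ne_iff.2 hg, fun g' hg' => ContinuousMap.ext_of_residualEq ?_⟩
  exact (isMeagre_setOf_ne_iff.1 hg').symm.trans hg
end

section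
/- Let X be a real Hilbert space and define on A = ℝ × X the product (α, y)∘(β, z) = (αβ + ⟨y, z⟩, αz + βy). Then A with this product, unit (1,0), and the norm ‖(α,y)‖ = |α| + ‖y‖ is a JB-algebra (the spin factor): the product is commutative and bilinear, satisfies the Jordan identity (a²∘b)∘a = a²∘(b∘a), and −1 ≤ a ≤ 1 implies 0 ≤ a∘a ≤ 1 with respect to the cone A⁺ = {(α, y) : ‖y‖ ≤ α}. -/
/-- The spin factor Jordan product on `ℝ × X` for a real Hilbert space `X`. -/
noncomputable def spinMul {X : Type*} [NormedAddCommGroup X] [InnerProductSpace ℝ X]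
    (a b : ℝ × X) : ℝ × X :=
  (a.1 * b.1 + inner ℝ a.2 b.2, a.1 • b.2 + b.1 • a.2)

/-- The spin factor order: `a ≤ b` iff `‖b.2 − a.2‖ ≤ b.1 − a.1`. -/
def spinLE {X : Type*} [NormedAddCommGroup X] [InnerProductSpace ℝ X]
    (a b : ℝ × X) : Prop :=
  ‖b.2 - a.2‖ ≤ b.1 - a.1

/-!
The Jordan identity holds because every square lies in the span of `1` and `a`:
`a∘a = 2α a + (‖y‖² - α²) 1` for `a = (α, y)`, so multiplication by `a∘a` is a combination of
the identity and multiplication by `a`, both of which commute with multiplication by `a`.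
For the order, `a∘a = (α² + ‖y‖², 2α y)` is positive since `2|α|‖y‖ ≤ α² + ‖y‖²`, and
`−1 ≤ a ≤ 1` means `|α| + ‖y‖ ≤ 1`, which gives `2|α|‖y‖ ≤ 1 - α² - ‖y‖²`, i.e. `a∘a ≤ 1`.
-/

namespace SpinFactor

variable {X : Type*} [NormedAddCommGroup X] [InnerProductSpace ℝ X]

theorem spinMul_comm (a b : ℝ × X) : spinMul a b = spinMul b a := by
  ext
  · simp only [spinMul, real_inner_comm, mul_comm]
  · exact add_comm _ _

theorem spinMul_add_left (a b c : ℝ × X) :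
    spinMul (a + b) c = spinMul a c + spinMul b c := by
  ext
  · simp only [spinMul, Prod.fst_add, Prod.snd_add, inner_add_left]; ring
  · simp only [spinMul, Prod.fst_add, Prod.snd_add, smul_add, add_smul]; abel

theorem spinMul_smul_left (r : ℝ) (a b : ℝ × X) :
    spinMul (r • a) b = r • spinMul a b := by
  ext
  · simp only [spinMul, Prod.smul_fst, Prod.smul_snd, smul_eq_mul, real_inner_smul_left]; ring
  · simp only [spinMul, Prod.smul_snd, Prod.smul_fst, smul_eq_mul, smul_add, smul_smul, mul_comm]

theorem one_spinMul (a : ℝ × X) : spinMul ((1 : ℝ), (0 : X)) a = a := by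
  ext <;> simp [spinMul]

theorem spinMul_self (a : ℝ × X) :
    spinMul a a = (a.1 ^ 2 + ‖a.2‖ ^ 2, (2 * a.1) • a.2) := by
  ext
  · simp only [spinMul, real_inner_self_eq_norm_sq]; ring
  · simp only [spinMul, ← two_smul ℝ, smul_smul]

theorem spinMul_self_eq_smul_add_smul_one (a : ℝ × X) :
    spinMul a a = (2 * a.1) • a + (‖a.2‖ ^ 2 - a.1 ^ 2) • ((1 : ℝ), (0 : X)) := by
  rw [spinMul_self]
  ext
  · simp only [Prod.fst_add, Prod.smul_fst, smul_eq_mul]; ring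
  · simp only [Prod.snd_add, Prod.smul_snd, smul_zero, add_zero]

theorem spinMul_spinMul_self_left (a b : ℝ × X) :
    spinMul (spinMul a a) b = (2 * a.1) • spinMul a b + (‖a.2‖ ^ 2 - a.1 ^ 2) • b := by
  rw [spinMul_self_eq_smul_add_smul_one, spinMul_add_left, spinMul_smul_left, spinMul_smul_left,
    one_spinMul]

theorem spinMul_jordan (a b : ℝ × X) :
    spinMul (spinMul a a) (spinMul b a) = spinMul (spinMul (spinMul a a) b) a := by
  have hcomm : spinMul (spinMul a b) a = spinMul a (spinMul b a) := by
    rw [spinMul_comm _ a, spinMul_comm a b]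
  rw [spinMul_spinMul_self_left, spinMul_spinMul_self_left, spinMul_add_left, spinMul_smul_left,
    spinMul_smul_left, hcomm]

theorem norm_two_mul_smul (α : ℝ) (y : X) : ‖(2 * α) • y‖ = 2 * |α| * ‖y‖ := by
  rw [norm_smul, Real.norm_eq_abs, abs_mul, abs_two]

theorem spinLE_zero_spinMul_self (a : ℝ × X) : spinLE 0 (spinMul a a) := by
  rw [spinLE, spinMul_self]
  simp only [Prod.snd_zero, Prod.fst_zero, sub_zero, norm_two_mul_smul]
  nlinarith [sq_abs a.1, sq_nonneg (|a.1| - ‖a.2‖)]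

theorem abs_add_norm_le_one_of_spinLE {a : ℝ × X} (hlow : spinLE (-((1 : ℝ), (0 : X))) a)
    (hupp : spinLE a ((1 : ℝ), (0 : X))) : |a.1| + ‖a.2‖ ≤ 1 := by
  simp only [spinLE, Prod.snd_neg, Prod.fst_neg, neg_zero, sub_zero, sub_neg_eq_add, zero_sub,
    norm_neg] at hlow hupp
  rcases abs_cases a.1 with ⟨h, _⟩ | ⟨h, _⟩ <;> linarith

theorem spinLE_spinMul_self_one {a : ℝ × X} (h : |a.1| + ‖a.2‖ ≤ 1) :
    spinLE (spinMul a a) ((1 : ℝ), (0 : X)) := by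
  rw [spinLE, spinMul_self]
  simp only [zero_sub, norm_neg, norm_two_mul_smul]
  nlinarith [sq_abs a.1, abs_nonneg a.1, norm_nonneg a.2]

end SpinFactor

open SpinFactor in
theorem spin_factor_is_JB_general (X : Type*) [NormedAddCommGroup X] [InnerProductSpace ℝ X] :
    (∀ a b : ℝ × X, spinMul a b = spinMul b a) ∧
    (∀ a b c : ℝ × X, spinMul (a + b) c = spinMul a c + spinMul b c) ∧
    (∀ (r : ℝ) (a b : ℝ × X), spinMul (r • a) b = r • spinMul a b) ∧
    (∀ a : ℝ × X, spinMul ((1 : ℝ), (0 : X)) a = a) ∧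
    (∀ a b : ℝ × X,
      spinMul (spinMul a a) (spinMul b a) = spinMul (spinMul (spinMul a a) b) a) ∧
    (∀ a : ℝ × X, spinLE (-((1 : ℝ), (0 : X))) a → spinLE a ((1 : ℝ), (0 : X)) →
      spinLE 0 (spinMul a a) ∧ spinLE (spinMul a a) ((1 : ℝ), (0 : X))) :=
  ⟨spinMul_comm, spinMul_add_left, spinMul_smul_left, one_spinMul, spinMul_jordan,
    fun _ hlow hupp => ⟨spinLE_zero_spinMul_self _,
      spinLE_spinMul_self_one (abs_add_norm_le_one_of_spinLE hlow hupp)⟩⟩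

/-- For a real Hilbert space `X`, the space `A = ℝ × X` with the product
`(α,y)∘(β,z) = (αβ + ⟨y,z⟩, αz + βy)`, unit `(1,0)` and norm `‖(α,y)‖ = |α| + ‖y‖` is
a JB-algebra (the spin factor): the product is commutative, bilinear, unital, satisfies
the Jordan identity, and `−1 ≤ a ≤ 1` implies `0 ≤ a∘a ≤ 1` for the cone
`{(α,y) : ‖y‖ ≤ α}`. -/
theorem spin_factor_is_JB (X : Type*) [NormedAddCommGroup X] [InnerProductSpace ℝ X]
    [CompleteSpace X] :
    (∀ a b : ℝ × X, spinMul a b = spinMul b a) ∧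
    (∀ a b c : ℝ × X, spinMul (a + b) c = spinMul a c + spinMul b c) ∧
    (∀ (r : ℝ) (a b : ℝ × X), spinMul (r • a) b = r • spinMul a b) ∧
    (∀ a : ℝ × X, spinMul ((1 : ℝ), (0 : X)) a = a) ∧
    (∀ a b : ℝ × X,
      spinMul (spinMul a a) (spinMul b a) = spinMul (spinMul (spinMul a a) b) a) ∧
    (∀ a : ℝ × X, spinLE (-((1 : ℝ), (0 : X))) a → spinLE a ((1 : ℝ), (0 : X)) →
      spinLE 0 (spinMul a a) ∧ spinLE (spinMul a a) ((1 : ℝ), (0 : X))) :=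
  spin_factor_is_JB_general X
end

section
/- Let A be an order unit space with a compression base (J_p)_{p∈P} having the comparability property, and let a ∈ A. If p, q ∈ P are both elements of P^±(a) (i.e., p, q lie in the P-bicommutant of a and satisfy J_{1−p}(a) ≤ 0 ≤ J_p(a), J_{1−q}(a) ≤ 0 ≤ J_q(a)), then J_p(a) = J_q(a) and −J_{1−p}(a) = −J_{1−q}(a); that is, the orthogonal decomposition a = a⁺ − a⁻ with a⁺ = J_p(a), a⁻ = −J_{1−p}(a), J_p(a⁻) = 0, is unique. -/
/-- A compression base on an order unit space `(A, A⁺, u)`: a family of compressions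
`J p` indexed by their foci `p ∈ P`, where `P` is a normal subalgebra of the unit
interval, satisfying `J (p+r) ∘ J (q+r) = J r` whenever `p + q + r ≤ u` in `P`. -/
structure CompressionBase (A : Type*) [AddCommGroup A] [PartialOrder A] [IsOrderedAddMonoid A] [Module ℝ A] (u : A) where
  P : Set A
  J : A → A →ₗ[ℝ] A
  mem_nonneg : ∀ p ∈ P, (0 : A) ≤ p
  mem_le : ∀ p ∈ P, p ≤ u
  zero_mem : (0 : A) ∈ P
  compl_mem : ∀ p ∈ P, u - p ∈ P
  add_mem : ∀ p ∈ P, ∀ q ∈ P, p + q ≤ u → p + q ∈ P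
  normal : ∀ d e f : A, 0 ≤ d → 0 ≤ e → 0 ≤ f → d + e + f ≤ u →
    d + e ∈ P → d + f ∈ P → d ∈ P
  pos : ∀ p ∈ P, ∀ a : A, 0 ≤ a → 0 ≤ J p a
  map_unit : ∀ p ∈ P, J p u = p
  fix : ∀ p ∈ P, ∀ e : A, 0 ≤ e → e ≤ u → e ≤ p → J p e = e
  ker_le : ∀ p ∈ P, ∀ e : A, 0 ≤ e → e ≤ u → J p e = 0 → e ≤ u - p
  comp : ∀ p ∈ P, ∀ q ∈ P, ∀ r ∈ P, p + q + r ≤ u →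
    (J (p + r)).comp (J (q + r)) = J r

variable {A : Type*} [AddCommGroup A] [PartialOrder A] [IsOrderedAddMonoid A] [Module ℝ A] {u : A}

/-- `x` commutes with the projection `p`: `x = J_p x + J_{1−p} x`. -/
def CompressionBase.Commutes (cb : CompressionBase A u) (x p : A) : Prop :=
  x = cb.J p x + cb.J (u - p) x

/-- The set `PC(a)` of projections commuting with `a`. -/
def CompressionBase.PC (cb : CompressionBase A u) (a : A) : Set A :=
  {p ∈ cb.P | cb.Commutes a p}

/-- The P-bicommutant `P(a) = PC(PC(a) ∪ {a})`. -/
def CompressionBase.Pbi (cb : CompressionBase A u) (a : A) : Set A :=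
  {q ∈ cb.P | cb.Commutes a q ∧ ∀ p ∈ cb.PC a, cb.Commutes p q}

/-- `P^±(a)`: the projections in `P(a)` with `J_{1−p} a ≤ 0 ≤ J_p a`. -/
def CompressionBase.Ppm (cb : CompressionBase A u) (a : A) : Set A :=
  {p ∈ cb.Pbi a | cb.J (u - p) a ≤ 0 ∧ 0 ≤ cb.J p a}

/-!
Since `q` commutes with `a` and `p ∈ P(a)`, the projections `p` and `q` commute, and then so
do the compressions `J_p` and `J_q`: writing `q = d + f` with `d = J_p q`, `f = J_{1−p} q`,
normality puts `d`, `p − d`, `f` in `P`, and the composition axiom gives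
`J_p J_q = J_d = J_q J_p`. Now `J_p J_{1−q} a` is `≤ 0` because `J_{1−q} a ≤ 0`, and equals
`J_{1−q} J_p a ≥ 0`; hence it vanishes and `J_p a = J_p J_q a`. By symmetry
`J_q a = J_q J_p a`, and the two agree because `J_p` and `J_q` commute.
-/

namespace CompressionBase

variable (cb : CompressionBase A u)

lemma J_le_self {p x : A} (hp : p ∈ cb.P) (hx : x ≤ u) : cb.J p x ≤ p := by
  have h := cb.pos p hp (u - x) (sub_nonneg.2 hx)
  rwa [map_sub, cb.map_unit p hp, sub_nonneg] at h

lemma commute_J_add_of_add_le {d e f : A} (hd : d ∈ cb.P) (he : e ∈ cb.P) (hf : f ∈ cb.P)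
    (h : e + f + d ≤ u) : Commute (cb.J (e + d)) (cb.J (f + d)) :=
  (cb.comp e he f hf d hd h).trans (cb.comp f hf e he d hd (by rwa [add_comm f e])).symm

variable {cb}

lemma Commutes.J_compl_eq {x p : A} (h : cb.Commutes x p) : cb.J (u - p) x = x - cb.J p x :=
  eq_sub_of_add_eq' h.symm

lemma Commutes.unit_sub {x p : A} (hp : p ∈ cb.P) (h : cb.Commutes x p) :
    cb.Commutes (u - x) p := by
  unfold Commutes
  rw [map_sub, map_sub, cb.map_unit p hp, cb.map_unit _ (cb.compl_mem p hp)]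
  conv_lhs => rw [h]
  abel

lemma Commutes.commute_J {p q : A} (hp : p ∈ cb.P) (hq : q ∈ cb.P) (h : cb.Commutes q p) :
    Commute (cb.J p) (cb.J q) := by
  set d := cb.J p q
  set f := cb.J (u - p) q
  have hdf : d + f = q := h.symm
  have hd0 : 0 ≤ d := cb.pos p hp q (cb.mem_nonneg q hq)
  have hf0 : 0 ≤ f := cb.pos _ (cb.compl_mem p hp) q (cb.mem_nonneg q hq)
  have hdp : d ≤ p := cb.J_le_self hp (cb.mem_le q hq)
  have hfp : f ≤ u - p := cb.J_le_self (cb.compl_mem p hp) (cb.mem_le q hq)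
  have hpf : p + f ≤ u := le_sub_iff_add_le'.1 hfp
  -- `u` is the sum of the four nonnegative pieces `d`, `p - d`, `f`, `u - p - f`.
  have hdP : d ∈ cb.P :=
    cb.normal d (p - d) f hd0 (sub_nonneg.2 hdp) hf0 (by rwa [add_sub_cancel])
      (by rwa [add_sub_cancel]) (by rwa [hdf])
  have hfP : f ∈ cb.P :=
    cb.normal f (u - p - f) d hf0 (sub_nonneg.2 hfp) hd0
      (by convert add_le_add_left hdp (u - p) using 1 <;> abel)
      (by rw [add_sub_cancel]; exact cb.compl_mem p hp) (by rwa [add_comm, hdf])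
  have hpdP : p - d ∈ cb.P :=
    cb.normal (p - d) d (u - p - f) (sub_nonneg.2 hdp) hd0 (sub_nonneg.2 hfp)
      (by convert sub_le_self u hf0 using 1; abel) (by rwa [sub_add_cancel])
      (by convert cb.compl_mem q hq using 1; rw [← hdf]; abel)
  have hcomm := cb.commute_J_add_of_add_le hdP hpdP hfP (by convert hpf using 1; abel)
  rwa [sub_add_cancel, add_comm f, hdf] at hcomm

lemma J_J_eq_zero_of_nonpos_of_nonneg {p r a : A} (hp : p ∈ cb.P) (hr : r ∈ cb.P)
    (hcomm : Commute (cb.J p) (cb.J r)) (hra : cb.J r a ≤ 0) (hpa : 0 ≤ cb.J p a) :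
    cb.J p (cb.J r a) = 0 := by
  refine le_antisymm ?_ ?_
  · have h := cb.pos p hp _ (neg_nonneg.2 hra)
    rwa [map_neg, neg_nonneg] at h
  · rw [← Module.End.mul_apply, hcomm.eq, Module.End.mul_apply]
    exact cb.pos r hr _ hpa

lemma Commutes.of_mem_Pbi {a p q : A} (hp : p ∈ cb.Pbi a) (hq : q ∈ cb.Pbi a) :
    cb.Commutes q p :=
  hp.2.2 q ⟨hq.1, hq.2.1⟩

lemma J_eq_J_J_of_mem_Ppm {a p q : A} (hp : p ∈ cb.Ppm a) (hq : q ∈ cb.Ppm a) :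
    cb.J p a = cb.J p (cb.J q a) := by
  have hpP := hp.1.1
  have huqP := cb.compl_mem q hq.1.1
  have hcomm := ((Commutes.of_mem_Pbi hp.1 hq.1).unit_sub hpP).commute_J hpP huqP
  have hzero := J_J_eq_zero_of_nonpos_of_nonneg hpP huqP hcomm hq.2.1 hp.2.2
  calc cb.J p a = cb.J p (cb.J q a + cb.J (u - q) a) := congrArg _ hq.1.2.1
    _ = cb.J p (cb.J q a) := by rw [map_add, hzero, add_zero]

end CompressionBase

theorem orth_decomposition_unique_general (cb : CompressionBase A u)
    (a p q : A) (hp : p ∈ cb.Ppm a) (hq : q ∈ cb.Ppm a) :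
    cb.J p a = cb.J q a ∧ -cb.J (u - p) a = -cb.J (u - q) a := by
  have hcomm := (CompressionBase.Commutes.of_mem_Pbi hp.1 hq.1).commute_J hp.1.1 hq.1.1
  have hpq : cb.J p a = cb.J q a := by
    rw [CompressionBase.J_eq_J_J_of_mem_Ppm hp hq, ← Module.End.mul_apply, hcomm.eq,
      Module.End.mul_apply, ← CompressionBase.J_eq_J_J_of_mem_Ppm hq hp]
  refine ⟨hpq, ?_⟩
  rw [hp.1.2.1.J_compl_eq, hq.1.2.1.J_compl_eq, hpq]

/-- If a compression base has the comparability property, then the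
orthogonal decomposition is unique: for any `p, q ∈ P^±(a)` one has
`J_p a = J_q a` and `−J_{1−p} a = −J_{1−q} a`. -/
theorem orth_decomposition_unique (cb : CompressionBase A u)
    (hcomp : ∀ a : A, ∃ p, p ∈ cb.Ppm a)
    (a p q : A) (hp : p ∈ cb.Ppm a) (hq : q ∈ cb.Ppm a) :
    cb.J p a = cb.J q a ∧ -cb.J (u - p) a = -cb.J (u - q) a :=
  orth_decomposition_unique_general cb a p q hp hq
end
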